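/- Let c > 0, d ∈ (0,1), e ∈ [-1,1], ρ ∈ ℝ, and define r₁ = ρ/c² - 2cd, r₄ = ρ/c² + 2cd, z₀+ρ = ρ/c² + 2cde. Then r₁ ≤ z₀+ρ ≤ r₄, and the energy E(c,d,e) = (1/2)(x₀² + y₀² + z₀²) with x₀ = (2d/c)√(1-e²)·√((c³de+ρ)² + (1-d²)c⁶), y₀ = c²(2d²e² - 2d² + 1) + 2deρ/c - 1, z₀ = ρ/c² + 2cde - ρ, equals (c⁴+ρ²)(c⁴+4c²d² - 2c² + 1)/(2c⁴). In particular the energy does not depend on e. -/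
import Mathlib


/-- with the reparametrization `(c,d,e)` of initial conditions,
`r₁ ≤ z₀+ρ ≤ r₄` and the energy `(x₀²+y₀²+z₀²)/2` equals
`(c⁴+ρ²)(c⁴+4c²d²-2c²+1)/(2c⁴)`; in particular it does not depend on `e`. -/
theorem energy_in_cde_coordinates (ρ c d e : ℝ)
    (hc : 0 < c) (hd0 : 0 < d) (hd1 : d < 1) (he1 : -1 ≤ e) (he2 : e ≤ 1)
    (x₀ y₀ z₀ : ℝ)
    (hx : x₀ = (2 * d / c) * Real.sqrt (1 - e ^ 2) *
      Real.sqrt ((c ^ 3 * d * e + ρ) ^ 2 + (1 - d ^ 2) * c ^ 6))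
    (hy : y₀ = c ^ 2 * (2 * d ^ 2 * e ^ 2 - 2 * d ^ 2 + 1) + 2 * d * e * ρ / c - 1)
    (hz : z₀ = ρ / c ^ 2 + 2 * c * d * e - ρ) :
    (ρ / c ^ 2 - 2 * c * d ≤ z₀ + ρ ∧ z₀ + ρ ≤ ρ / c ^ 2 + 2 * c * d) ∧
    (x₀ ^ 2 + y₀ ^ 2 + z₀ ^ 2) / 2
      = (c ^ 4 + ρ ^ 2) * (c ^ 4 + 4 * c ^ 2 * d ^ 2 - 2 * c ^ 2 + 1) / (2 * c ^ 4) := by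
  have he : (0:ℝ) ≤ 1 - e ^ 2 := by nlinarith
  have hA : (0:ℝ) ≤ (c ^ 3 * d * e + ρ) ^ 2 + (1 - d ^ 2) * c ^ 6 := by nlinarith [sq_nonneg (c ^ 3 * d * e + ρ), pow_pos hc 6, mul_pos (mul_pos (sub_pos.2 hd1) (by linarith : (0:ℝ) < 1 + d)) (pow_pos hc 6)]
  refine ⟨⟨?_, ?_⟩, ?_⟩
  · rw [hz]; nlinarith [mul_pos hc hd0]
  · rw [hz]; nlinarith [mul_pos hc hd0]
  · have hx2 : x₀ ^ 2 = (2 * d / c) ^ 2 * (1 - e ^ 2) *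
        ((c ^ 3 * d * e + ρ) ^ 2 + (1 - d ^ 2) * c ^ 6) := by
      rw [hx, mul_pow, mul_pow, Real.sq_sqrt he, Real.sq_sqrt hA]
    rw [hx2, hy, hz]
    have hc0 : c ≠ 0 := ne_of_gt hc
    field_simp
    ring
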